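/- Let μₙ (n < ω) be strictly increasing regular cardinals with supremum μ and q a normal condition in Q. Then there exists a family {q_α : α < μ^{ℵ₀}} of pairwise incompatible conditions in Q below q. In particular, the cellularity of the poset Q of closed size-μ subsets of μ is at least μ^{ℵ₀}. -/

import Mathlib

open Cardinal Set

noncomputable section

/-- Cardinality of a set of ordinals. -/
def scard (s : Set Ordinal.{0}) : Cardinal.{1} := Cardinal.mk s

/-- The set of accumulation points of a set of ordinals `p`:
ordinals `α` such that `p ∩ α` is nonempty and unbounded in `α`. -/
def accSet (p : Set Ordinal.{0}) : Set Ordinal.{0} :=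
  {α | (p ∩ Set.Iio α).Nonempty ∧ α = sSup (p ∩ Set.Iio α)}

/-- A set of ordinals is closed iff it contains all of its accumulation
points below its supremum. -/
def IsClosedCond (q : Set Ordinal.{0}) : Prop :=
  accSet q ∩ Set.Iio (sSup q) ⊆ q

/-- Order type of a set of ordinals. -/
def otp (s : Set Ordinal.{0}) : Ordinal.{1} :=
  Ordinal.type ((· < ·) : s → s → Prop)

/-- Membership in the poset `P`: subsets of `μ` of cardinality `μ`. -/
def InP (μ : Cardinal.{0}) (p : Set Ordinal.{0}) : Prop :=
  p ⊆ Set.Iio μ.ord ∧ scard p = Cardinal.lift.{1,0} μ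

/-- The almost-inclusion ordering: `p₁ ≤ p₂` iff `|p₁ \ p₂| < μ`. -/
def condLe (μ : Cardinal.{0}) (p₁ p₂ : Set Ordinal.{0}) : Prop :=
  scard (p₁ \ p₂) < Cardinal.lift.{1,0} μ

/-- Membership in the poset `Q`: closed subsets of `μ` of cardinality `μ`. -/
def InQ (μ : Cardinal.{0}) (q : Set Ordinal.{0}) : Prop :=
  InP μ q ∧ IsClosedCond q

/-- The interval `[μₙ, μₙ₊₁)`. -/
def interval (μseq : ℕ → Cardinal.{0}) (n : ℕ) : Set Ordinal.{0} :=
  Set.Ico ((μseq n).ord) ((μseq (n+1)).ord)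

/-- `a(q) = {n : q ∩ [μₙ, μₙ₊₁) ≠ ∅}`. -/
def aSet (μseq : ℕ → Cardinal.{0}) (q : Set Ordinal.{0}) : Set ℕ :=
  {n | (q ∩ interval μseq n).Nonempty}

/-- Normality: letting `⟨mₙ⟩` enumerate `a(q)` increasingly,
`otp (q ∩ [μ_{mₙ}, μ_{mₙ+1})) = μₙ + 1`. -/
def IsNormalCond (μseq : ℕ → Cardinal.{0}) (q : Set Ordinal.{0}) : Prop :=
  ∃ m : ℕ → ℕ, StrictMono m ∧ Set.range m = aSet μseq q ∧
    ∀ n, otp (q ∩ interval μseq (m n)) = Ordinal.lift.{1,0} ((μseq n).ord + 1)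

/-- `χ⁺_q(n) = sup (q ∩ [μₙ, μₙ₊₁))`. -/
def chiP (μseq : ℕ → Cardinal.{0}) (q : Set Ordinal.{0}) (n : ℕ) : Ordinal.{0} :=
  sSup (q ∩ interval μseq n)

/-- `χ⁻_q(n) = min (q ∩ [μₙ, μₙ₊₁))`. -/
def chiM (μseq : ℕ → Cardinal.{0}) (q : Set Ordinal.{0}) (n : ℕ) : Ordinal.{0} :=
  sInf (q ∩ interval μseq n)

/-- `μₙ` is a strictly increasing sequence of regular cardinals with supremum `μ`. -/
def GoodSeq (μ : Cardinal.{0}) (μseq : ℕ → Cardinal.{0}) : Prop :=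
  StrictMono μseq ∧ (∀ n, (μseq n).IsRegular) ∧ μ = ⨆ n, μseq n

/-!
Cut `q` into the blocks `q ∩ [μ_{m n}, μ_{m n + 1})`, where `m n` runs through `a(q)` without
its least element; normality gives the `n`-th block size `μ_{n+1}`. A branch
`g ∈ ∏ₙ μₙ` chooses in the `n`-th block a piece of size `μₙ` indexed by a code of
`(g 0, …, g n)`, pieces with different codes being separated by gaps, and `q_g` is the union
of the closures of these pieces. By regularity of `μ_{m n + 1}` each closure stays inside its
block, so `q_g ⊆ q` is closed of size `μ`, and branches splitting at level `i` share no piece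
from level `i` on, so `q_g ∩ q_{g'}` is bounded below `μ_{m i}`. There are `∏ₙ μₙ = μ^ℵ₀`
branches.
-/

theorem mem_accSet_iff {P : Set Ordinal.{0}} {α : Ordinal.{0}} :
    α ∈ accSet P ↔ (∃ x ∈ P, x < α) ∧ ∀ β < α, ∃ x ∈ P, β < x ∧ x < α := by
  have hbdd : BddAbove (P ∩ Iio α) := ⟨α, fun x hx => hx.2.le⟩
  constructor
  · rintro ⟨hne, hsup⟩
    refine ⟨hne, fun β hβ => ?_⟩
    obtain ⟨x, hx, hβx⟩ := (lt_csSup_iff hbdd hne).1 (hsup ▸ hβ)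
    exact ⟨x, hx.1, hβx, hx.2⟩
  · rintro ⟨hne, hcof⟩
    refine ⟨hne, le_antisymm ?_ (csSup_le hne fun x hx => hx.2.le)⟩
    by_contra! hlt
    obtain ⟨x, hx, hsx, hxα⟩ := hcof _ hlt
    exact (le_csSup hbdd ⟨hx, hxα⟩).not_gt hsx

theorem accSet_mono {P P' : Set Ordinal.{0}} (h : P ⊆ P') : accSet P ⊆ accSet P' := by
  intro α hα
  rw [mem_accSet_iff] at hα ⊢
  obtain ⟨⟨x, hx, hxα⟩, hcof⟩ := hα
  refine ⟨⟨x, h hx, hxα⟩, fun β hβ => ?_⟩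
  obtain ⟨y, hy, hβy, hyα⟩ := hcof β hβ
  exact ⟨y, h hy, hβy, hyα⟩

theorem exists_lt_of_mem_accSet {P : Set Ordinal.{0}} {α : Ordinal.{0}} (h : α ∈ accSet P) :
    ∃ x ∈ P, x < α :=
  (mem_accSet_iff.1 h).1

theorem le_of_mem_accSet {P : Set Ordinal.{0}} {α c : Ordinal.{0}} (h : α ∈ accSet P)
    (hc : ∀ x ∈ P, x ≤ c) : α ≤ c := by
  rw [h.2]
  exact csSup_le h.1 fun x hx => hc x hx.1

def accClosure (P : Set Ordinal.{0}) : Set Ordinal.{0} := P ∪ accSet P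

theorem accSet_accClosure_subset (P : Set Ordinal.{0}) :
    accSet (accClosure P) ⊆ accClosure P := by
  intro α hα
  right
  rw [mem_accSet_iff] at hα ⊢
  obtain ⟨⟨x, hx, hxα⟩, hcof⟩ := hα
  refine ⟨?_, fun β hβ => ?_⟩
  · rcases hx with hx | hx
    · exact ⟨x, hx, hxα⟩
    · obtain ⟨z, hz, hzx⟩ := exists_lt_of_mem_accSet hx
      exact ⟨z, hz, hzx.trans hxα⟩
  · obtain ⟨y, hy | hy, hβy, hyα⟩ := hcof β hβ
    · exact ⟨y, hy, hβy, hyα⟩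
    · obtain ⟨z, hz, hβz, hzy⟩ := (mem_accSet_iff.1 hy).2 β hβy
      exact ⟨z, hz, hβz, hzy.trans hyα⟩

/-- An accumulation point of the union lies in the closure of the last block reaching
below it. -/
theorem isClosedCond_iUnion {D : ℕ → Set Ordinal.{0}} (hD : ∀ n, accSet (D n) ⊆ D n)
    (hsep : ∀ n k, n < k → ∀ x ∈ D n, ∀ y ∈ D k, x < y) : IsClosedCond (⋃ n, D n) := by
  classical
  rintro α ⟨hα, hα_lt⟩
  obtain ⟨⟨x, hx, hxα⟩, hcof⟩ := mem_accSet_iff.1 hα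
  obtain ⟨y, hy, hαy⟩ := exists_lt_of_lt_csSup ⟨x, hx⟩ hα_lt
  obtain ⟨N, hyN⟩ := mem_iUnion.1 hy
  have hbound : ∀ k, ∀ z ∈ D k, z < α → k ≤ N := by
    intro k z hz hzα
    by_contra! hNk
    exact (hsep N k hNk y hyN z hz).not_gt (hzα.trans hαy)
  let M := Nat.findGreatest (fun k => ∃ z ∈ D k, z < α) N
  obtain ⟨k₀, hxk₀⟩ := mem_iUnion.1 hx
  obtain ⟨x₀, hx₀, hx₀α⟩ : ∃ z ∈ D M, z < α :=
    Nat.findGreatest_spec (P := fun k => ∃ z ∈ D k, z < α) (hbound k₀ x hxk₀ hxα) ⟨x, hxk₀, hxα⟩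
  refine mem_iUnion.2 ⟨M, hD M (mem_accSet_iff.2 ⟨⟨x₀, hx₀, hx₀α⟩, fun β hβ => ?_⟩)⟩
  obtain ⟨z, hz, hβz, hzα⟩ := hcof (max β x₀) (max_lt hβ hx₀α)
  obtain ⟨k, hzk⟩ := mem_iUnion.1 hz
  have hkM : k ≤ M := Nat.le_findGreatest (hbound k z hzk hzα) ⟨z, hzk, hzα⟩
  have hMk : M ≤ k := by
    by_contra! hkM'
    exact (hsep k M hkM' z hzk x₀ hx₀).not_gt ((le_max_right β x₀).trans_lt hβz)
  obtain rfl : k = M := le_antisymm hkM hMk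
  exact ⟨z, hzk, (le_max_left β x₀).trans_lt hβz, hzα⟩

theorem le_of_mem_accClosure {P : Set Ordinal.{0}} {c x : Ordinal.{0}} (hc : ∀ y ∈ P, y ≤ c)
    (hx : x ∈ accClosure P) : x ≤ c :=
  hx.elim (hc x) fun hx => le_of_mem_accSet hx hc

theorem exists_le_of_mem_accClosure {P : Set Ordinal.{0}} {x : Ordinal.{0}}
    (hx : x ∈ accClosure P) : ∃ y ∈ P, y ≤ x := by
  rcases hx with hx | hx
  · exact ⟨x, hx, le_rfl⟩
  · obtain ⟨y, hy, hyx⟩ := exists_lt_of_mem_accSet hx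
    exact ⟨y, hy, hyx.le⟩

theorem accClosure_lt_accClosure {P P' : Set Ordinal.{0}} {c : Ordinal.{0}}
    (hP : ∀ x ∈ P, x ≤ c) (hP' : ∀ y ∈ P', c < y) :
    ∀ x ∈ accClosure P, ∀ y ∈ accClosure P', x < y := by
  intro x hx y hy
  obtain ⟨z, hz, hzy⟩ := exists_le_of_mem_accClosure hy
  exact (le_of_mem_accClosure hP hx).trans_lt ((hP' z hz).trans_le hzy)

theorem accClosure_subset {P q : Set Ordinal.{0}} {y : Ordinal.{0}} (hq : IsClosedCond q)
    (hqb : BddAbove q) (hPq : P ⊆ q) (hy : y ∈ q) (hPy : ∀ x ∈ accSet P, x < y) :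
    accClosure P ⊆ q := by
  rintro x (hx | hx)
  · exact hPq hx
  · exact hq ⟨accSet_mono hPq hx, (hPy x hx).trans_le (le_csSup hqb hy)⟩

namespace Ordinal

theorem not_bddAbove_union_Ici (B : Set Ordinal.{0}) (b : Ordinal.{0}) :
    ¬ BddAbove (B ∪ Ici b) :=
  fun h => not_bddAbove_Ici (a := b) (h.mono subset_union_right)

theorem enumOrd_union_Ici_mem {B : Set Ordinal.{0}} {b ξ : Ordinal.{0}} (hB : B ⊆ Iio b)
    (hξ : Cardinal.lift.{1} ξ.card < #B) : enumOrd (B ∪ Ici b) ξ ∈ B := by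
  have hs := not_bddAbove_union_Ici B b
  refine (enumOrd_mem hs ξ).resolve_right fun hbξ => hξ.not_ge ?_
  have himg : B ⊆ enumOrd (B ∪ Ici b) '' Iio ξ := by
    intro x hx
    obtain ⟨ζ, rfl⟩ := enumOrd_surjective hs (Or.inl hx : x ∈ B ∪ Ici b)
    exact ⟨ζ, (enumOrd_strictMono hs).lt_iff_lt.1 ((hB hx).trans_le hbξ), rfl⟩
  calc #B ≤ #(enumOrd (B ∪ Ici b) '' Iio ξ) := mk_le_mk_of_subset himg
    _ ≤ #(Iio ξ) := mk_image_le
    _ = Cardinal.lift.{1} ξ.card := Cardinal.mk_Iio_ordinal ξ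

theorem sSup_lt_ord_of_isRegular {s : Set Ordinal.{0}} {c : Cardinal.{0}} (hc : c.IsRegular)
    (hs : #s < Cardinal.lift.{1} c) (hsub : s ⊆ Iio c.ord) : sSup s < c.ord :=
  sSup_lt_of_lt_cof (by rwa [← lift_cof, hc.cof_ord]) hsub

theorem card_mul_two_mul_self {γ : Ordinal.{0}} (hγ : ℵ₀ ≤ γ.card) :
    (γ * 2 * γ).card = γ.card := by
  have h2 : (2 : Cardinal) ≤ γ.card := (natCast_lt_aleph0 (n := 2)).le.trans hγ
  rw [card_mul, card_mul, card_ofNat, mul_eq_left hγ h2 two_ne_zero, mul_eq_self hγ]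

end Ordinal

namespace Cardinal

theorem mk_pi_Iio_ord_eq {μ : Cardinal.{0}} {κ : ℕ → Cardinal.{0}} (hκ : Monotone κ)
    (hκ0 : ∀ n, κ n ≠ 0) (hsup : μ = ⨆ n, κ n) :
    #(∀ n, Iio (κ n).ord) = Cardinal.lift.{1} (μ ^ ℵ₀) := by
  classical
  have hle : ∀ n, (κ n).ord ≤ μ.ord := fun n => ord_le_ord.2 (hsup ▸ le_ciSup bddAbove_of_small n)
  have hcof : ∀ β < μ.ord, ∃ n, β < (κ n).ord := by
    intro β hβ
    rw [lt_ord, hsup] at hβ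
    obtain ⟨n, hn⟩ := (lt_ciSup_iff bddAbove_of_small).1 hβ
    exact ⟨n, lt_ord.2 hn⟩
  have hpow : #(ℕ → Iio μ.ord) = Cardinal.lift.{1} (μ ^ ℵ₀) := by
    rw [mk_arrow, mk_Iio_ordinal, card_ord, lift_uzero, mk_nat, lift_aleph0, lift_power,
      lift_aleph0]
  refine le_antisymm ((mk_le_of_injective (f := fun g n => ⟨g n, (g n).2.trans_le (hle n)⟩)
    fun g g' h => ?_).trans_eq hpow) (hpow.symm.trans_le (mk_le_of_injective (f := fun f k =>
      if h : (f k.unpair.2 : Ordinal) < (κ k).ord then ⟨f k.unpair.2, h⟩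
      else ⟨0, by simpa [pos_iff_ne_zero] using hκ0 k⟩) fun f f' h => ?_))
  · funext n
    have hn := congrArg Subtype.val (congrFun h n)
    exact Subtype.ext hn
  · funext k
    -- `f k` is recorded at position `pair n k` as soon as `f k < κ n`
    obtain ⟨n, hn⟩ := hcof _ (max_lt (f k).2 (f' k).2)
    have hn' := hn.trans_le (ord_le_ord.2 (hκ (Nat.left_le_pair n k)))
    have hk := congrArg Subtype.val (congrFun h (Nat.pair n k))
    simp only [Nat.unpair_pair, dif_pos ((le_max_left _ _).trans_lt hn'),
      dif_pos ((le_max_right _ _).trans_lt hn')] at hk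
    exact Subtype.ext hk

theorem mk_pi_fin_Iio_ord_le {κ : ℕ → Cardinal.{0}} (hκ : Monotone κ) {n : ℕ} (hn : ℵ₀ ≤ κ n) :
    #(∀ i : Fin (n + 1), Iio (κ i).ord) ≤ #(Iio (κ n).ord) := by
  have hinj : Function.Injective fun (f : ∀ i : Fin (n + 1), Iio (κ i).ord) i =>
      (⟨f i, (f i).2.trans_le (ord_le_ord.2 (hκ (Nat.le_of_lt_succ i.2)))⟩ : Iio (κ n).ord) :=
    fun f f' h => funext fun i => by
      have hi := congrArg Subtype.val (congrFun h i)
      exact Subtype.ext hi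
  refine (mk_le_of_injective hinj).trans ?_
  rw [mk_arrow, mk_fin, lift_uzero, lift_natCast]
  exact power_nat_le (by rw [mk_Iio_ordinal, card_ord]; exact aleph0_le_lift.2 hn)

end Cardinal

/-- The factor `2` leaves a gap of length `γ` between consecutive pieces, so that the
accumulation points of a piece stay below the next one. -/
def piece (f : Ordinal.{0} → Ordinal.{0}) (γ t : Ordinal.{0}) : Set Ordinal.{0} :=
  (fun ξ => f (γ * 2 * t + ξ)) '' Iio γ

section Piece

variable {f : Ordinal.{0} → Ordinal.{0}} {γ : Ordinal.{0}}

theorem mk_piece (hf : StrictMono f) (t : Ordinal.{0}) :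
    #(piece f γ t) = Cardinal.lift.{1} γ.card := by
  have hinj : StrictMono fun ξ => f (γ * 2 * t + ξ) := hf.comp fun _ _ h => add_lt_add_right h _
  rw [piece, mk_image_eq hinj.injective, Cardinal.mk_Iio_ordinal]

theorem piece_subset_image {t : Ordinal.{0}} (ht : t < γ) :
    piece f γ t ⊆ f '' Iio (γ * 2 * γ) := by
  rintro _ ⟨ξ, hξ, rfl⟩
  refine ⟨_, ?_, rfl⟩
  calc γ * 2 * t + ξ < γ * 2 * t + γ * 2 :=
        add_lt_add_right (hξ.trans_le (Ordinal.le_mul_left γ two_pos)) _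
    _ = γ * 2 * (t + 1) := (mul_add_one _ _).symm
    _ ≤ γ * 2 * γ := mul_le_mul_right (Order.add_one_le_of_lt ht) _

theorem accClosure_piece_lt (hf : StrictMono f) {t t' : Ordinal.{0}} (htt' : t < t') :
    ∀ x ∈ accClosure (piece f γ t), ∀ y ∈ accClosure (piece f γ t'), x < y := by
  refine accClosure_lt_accClosure (c := f (γ * 2 * t + γ)) ?_ ?_
  · rintro _ ⟨ξ, hξ, rfl⟩
    exact (hf (add_lt_add_right hξ _)).le
  · rintro _ ⟨ξ, hξ, rfl⟩
    refine hf ?_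
    have hγ : γ < γ * 2 := by
      simpa using mul_lt_mul_of_pos_left (one_lt_two : (1 : Ordinal) < 2) (pos_of_gt hξ.out)
    calc γ * 2 * t + γ < γ * 2 * t + γ * 2 := add_lt_add_right hγ _
      _ = γ * 2 * (t + 1) := (mul_add_one _ _).symm
      _ ≤ γ * 2 * t' := mul_le_mul_right (Order.add_one_le_of_lt htt') _
      _ ≤ γ * 2 * t' + ξ := le_self_add

end Piece

abbrev Branch (κ : ℕ → Cardinal.{0}) : Type 1 := ∀ n, Iio (κ n).ord

def Branch.prefix {κ : ℕ → Cardinal.{0}} (g : Branch κ) (n : ℕ) :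
    ∀ i : Fin (n + 1), Iio (κ i).ord :=
  fun i => g i

section Construction

variable (μseq : ℕ → Cardinal.{0}) (q : Set Ordinal.{0}) (m : ℕ → ℕ)
  (code : ∀ n, (∀ i : Fin (n + 1), Iio (μseq i).ord) ↪ Iio (μseq n).ord)

/-- Padding with `[μ_{j+1}, ∞)` makes the enumeration of `q ∩ [μ_j, μ_{j+1})` strictly
monotone on all ordinals. -/
def blockEnum (j : ℕ) : Ordinal.{0} → Ordinal.{0} :=
  Ordinal.enumOrd (q ∩ interval μseq j ∪ Ici (μseq (j + 1)).ord)

/-- The code of `(g 0, …, g n)` selects the piece of the block `q ∩ [μ_{m n}, μ_{m n + 1})`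
that the branch `g` occupies at level `n`. -/
def branchPiece (g : Branch μseq) (n : ℕ) : Set Ordinal.{0} :=
  piece (blockEnum μseq q (m n)) (μseq n).ord (code n (g.prefix n))

def branchSet (g : Branch μseq) : Set Ordinal.{0} :=
  ⋃ n, accClosure (branchPiece μseq q m code g n)

variable {μseq q m code}

theorem strictMono_blockEnum (j : ℕ) : StrictMono (blockEnum μseq q j) :=
  Ordinal.enumOrd_strictMono (Ordinal.not_bddAbove_union_Ici _ _)

theorem mk_branchPiece (g : Branch μseq) (n : ℕ) :
    #(branchPiece μseq q m code g n) = Cardinal.lift.{1} (μseq n) := by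
  rw [branchPiece, mk_piece (strictMono_blockEnum _), card_ord]

theorem disjoint_accClosure_branchPiece {n : ℕ} {g g' : Branch μseq}
    (h : g.prefix n ≠ g'.prefix n) :
    Disjoint (accClosure (branchPiece μseq q m code g n))
      (accClosure (branchPiece μseq q m code g' n)) := by
  have hne : (code n (g.prefix n) : Ordinal) ≠ code n (g'.prefix n) :=
    fun h' => h ((code n).injective (Subtype.ext h'))
  refine disjoint_left.2 fun x hx hx' => ?_
  rcases hne.lt_or_gt with hlt | hlt
  · exact (accClosure_piece_lt (strictMono_blockEnum _) hlt x hx x hx').false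
  · exact (accClosure_piece_lt (strictMono_blockEnum _) hlt x hx' x hx).false

theorem lift_le_mk_branchSet {μ : Cardinal.{0}} (hsup : μ = ⨆ n, μseq n) (g : Branch μseq) :
    Cardinal.lift.{1} μ ≤ #(branchSet μseq q m code g) := by
  rw [hsup, lift_iSup bddAbove_of_small]
  refine ciSup_le fun n => (mk_branchPiece (q := q) (m := m) (code := code) g n).symm.le.trans
    (mk_le_mk_of_subset ?_)
  exact subset_union_left.trans (subset_iUnion (fun k => accClosure _) n)

theorem branchPiece_subset (hreg : ∀ n, (μseq n).IsRegular)
    (hblock : ∀ n, Cardinal.lift.{1} (μseq n) < #↑(q ∩ interval μseq (m n)))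
    (g : Branch μseq) (n : ℕ) :
    branchPiece μseq q m code g n ⊆ q ∩ interval μseq (m n) := by
  have hγ : ℵ₀ ≤ (μseq n).ord.card := by rw [card_ord]; exact (hreg n).aleph0_le
  rintro _ hx
  obtain ⟨ζ, hζ, rfl⟩ := piece_subset_image (code n (g.prefix n)).2 hx
  refine Ordinal.enumOrd_union_Ici_mem (fun x hx => hx.2.2) (lt_of_le_of_lt ?_ (hblock n))
  rw [Cardinal.lift_le, ← card_ord (μseq n), ← Ordinal.card_mul_two_mul_self hγ]
  exact Ordinal.card_le_card (le_of_lt hζ)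

section Blocks

variable (hμ : StrictMono μseq) (hreg : ∀ n, (μseq n).IsRegular) (hm : StrictMono m)
  (hblock : ∀ n, Cardinal.lift.{1} (μseq n) < #↑(q ∩ interval μseq (m n)))
include hμ hreg hm hblock

theorem accClosure_branchPiece_subset (g : Branch μseq) (n : ℕ) :
    accClosure (branchPiece μseq q m code g n) ⊆ Ico (μseq (m n)).ord (μseq (m n + 1)).ord := by
  have hsub : branchPiece μseq q m code g n ⊆ _ := branchPiece_subset hreg hblock g n
  have hsup : sSup (branchPiece μseq q m code g n) < (μseq (m n + 1)).ord := by
    refine Ordinal.sSup_lt_ord_of_isRegular (hreg _) ?_ fun x hx => (hsub hx).2.2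
    rw [mk_branchPiece, Cardinal.lift_lt]
    exact hμ.monotone (hm.id_le n) |>.trans_lt (hμ (Nat.lt_succ_self _))
  intro x hx
  obtain ⟨y, hy, hyx⟩ := exists_le_of_mem_accClosure hx
  refine ⟨(hsub hy).2.1.trans hyx, lt_of_le_of_lt ?_ hsup⟩
  exact le_of_mem_accClosure (fun y hy => le_csSup ⟨_, fun z hz => (hsub hz).2.2.le⟩ hy) hx

theorem accClosure_branchPiece_lt {n k : ℕ} (hnk : n < k) (g g' : Branch μseq) :
    ∀ x ∈ accClosure (branchPiece μseq q m code g n),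
      ∀ y ∈ accClosure (branchPiece μseq q m code g' k), x < y := fun _ hx _ hy =>
  (accClosure_branchPiece_subset hμ hreg hm hblock g n hx).2.trans_le <|
    (ord_le_ord.2 (hμ.monotone (hm hnk))).trans
      (accClosure_branchPiece_subset hμ hreg hm hblock g' k hy).1

theorem isClosedCond_branchSet (g : Branch μseq) : IsClosedCond (branchSet μseq q m code g) :=
  isClosedCond_iUnion (fun _ => accSet_accClosure_subset _) fun _ _ hnk =>
    accClosure_branchPiece_lt hμ hreg hm hblock hnk g g

theorem branchSet_subset (hq : IsClosedCond q) (hqb : BddAbove q) (g : Branch μseq) :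
    branchSet μseq q m code g ⊆ q := by
  refine iUnion_subset fun n => ?_
  obtain ⟨y, hy⟩ : (q ∩ interval μseq (m (n + 1))).Nonempty :=
    nonempty_coe_sort.1 (mk_ne_zero_iff.1 (pos_of_gt (hblock (n + 1))).ne')
  refine accClosure_subset hq hqb ((branchPiece_subset hreg hblock g n).trans inter_subset_left)
    hy.1 fun x hx => ?_
  exact (accClosure_branchPiece_subset hμ hreg hm hblock g n (Or.inr hx)).2.trans_le
    ((ord_le_ord.2 (hμ.monotone (hm (Nat.lt_succ_self n)))).trans hy.2.1)

theorem branchSet_inter_subset {g g' : Branch μseq} {i : ℕ} (hi : g i ≠ g' i) :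
    branchSet μseq q m code g ∩ branchSet μseq q m code g' ⊆ Iio (μseq (m i)).ord := by
  rintro x ⟨hx, hx'⟩
  obtain ⟨n, hxn⟩ := mem_iUnion.1 hx
  obtain ⟨k, hxk⟩ := mem_iUnion.1 hx'
  obtain rfl : n = k := by
    rcases lt_trichotomy n k with h | h | h
    · exact (accClosure_branchPiece_lt hμ hreg hm hblock h g g' x hxn x hxk).false.elim
    · exact h
    · exact (accClosure_branchPiece_lt hμ hreg hm hblock h g' g x hxk x hxn).false.elim
  have hni : n < i := by
    by_contra! hin
    refine disjoint_left.1 (disjoint_accClosure_branchPiece fun h => hi ?_) hxn hxk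
    exact congrFun h ⟨i, Nat.lt_succ_of_le hin⟩
  exact (accClosure_branchPiece_subset hμ hreg hm hblock g n hxn).2.trans_le
    (ord_le_ord.2 (hμ.monotone (hm hni)))

theorem mk_branchSet {μ : Cardinal.{0}} (hq : IsClosedCond q) (hqμ : q ⊆ Iio μ.ord)
    (hqcard : #q = Cardinal.lift.{1} μ) (hsup : μ = ⨆ n, μseq n) (g : Branch μseq) :
    #(branchSet μseq q m code g) = Cardinal.lift.{1} μ :=
  le_antisymm (hqcard ▸ mk_le_mk_of_subset
      (branchSet_subset hμ hreg hm hblock hq ⟨_, fun _ hx => (hqμ hx).le⟩ g))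
    (lift_le_mk_branchSet hsup g)

theorem mk_inter_branchSet_lt {μ : Cardinal.{0}} (hsup : μ = ⨆ n, μseq n) {g g' : Branch μseq}
    (hne : g ≠ g') :
    #↑(branchSet μseq q m code g ∩ branchSet μseq q m code g') < Cardinal.lift.{1} μ := by
  obtain ⟨i, hi⟩ := Function.ne_iff.1 hne
  calc #↑(branchSet μseq q m code g ∩ branchSet μseq q m code g')
      ≤ #(Iio (μseq (m i)).ord) :=
        mk_le_mk_of_subset (branchSet_inter_subset hμ hreg hm hblock hi)
    _ = Cardinal.lift.{1} (μseq (m i)) := by rw [Cardinal.mk_Iio_ordinal, card_ord]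
    _ < Cardinal.lift.{1} μ :=
      lift_lt.2 ((hμ (Nat.lt_succ_self _)).trans_le (hsup ▸ le_ciSup bddAbove_of_small _))

end Blocks

end Construction

theorem IsNormalCond.exists_blocks {μseq : ℕ → Cardinal.{0}} {q : Set Ordinal.{0}}
    (hq : IsNormalCond μseq q) (hμ : StrictMono μseq) (hinf : ∀ n, ℵ₀ ≤ μseq n) :
    ∃ m : ℕ → ℕ, StrictMono m ∧
      ∀ n, Cardinal.lift.{1} (μseq n) < #↑(q ∩ interval μseq (m n)) := by
  obtain ⟨m, hm, -, hotp⟩ := hq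
  refine ⟨m ∘ Nat.succ, hm.comp fun _ _ => Nat.succ_lt_succ, fun n => ?_⟩
  have hcard : #↑(q ∩ interval μseq (m (n + 1))) = Cardinal.lift.{1} (μseq (n + 1)) := by
    rw [← Ordinal.card_type (· < ·), ← otp, hotp, ← Ordinal.lift_card, Ordinal.card_add,
      Ordinal.card_one, card_ord, add_one_eq (hinf _)]
  exact hcard ▸ lift_lt.2 (hμ (Nat.lt_succ_self n))

theorem condLe_of_subset {μ : Cardinal.{0}} (hμ : μ ≠ 0) {p₁ p₂ : Set Ordinal.{0}}
    (h : p₁ ⊆ p₂) : condLe μ p₁ p₂ := by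
  rw [condLe, scard, sdiff_eq_empty.2 h, mk_eq_zero, pos_iff_ne_zero, Ne, lift_eq_zero]
  exact hμ

theorem stmt_14_general (μ : Cardinal.{0}) (hinf : Cardinal.aleph0 < μ)
    (μseq : ℕ → Cardinal.{0}) (hseq : GoodSeq μ μseq)
    (q : Set Ordinal.{0}) (hq : InQ μ q) (hn : IsNormalCond μseq q) :
    ∃ F : Set (Set Ordinal.{0}),
      Cardinal.mk F = Cardinal.lift.{1,0} (μ ^ Cardinal.aleph0) ∧
      (∀ q' ∈ F, InQ μ q' ∧ condLe μ q' q) ∧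
      ∀ q₁ ∈ F, ∀ q₂ ∈ F, q₁ ≠ q₂ →
        scard (q₁ ∩ q₂) < Cardinal.lift.{1,0} μ := by
  obtain ⟨⟨hqμ, hqcard⟩, hqclosed⟩ := hq
  obtain ⟨hμ, hreg, hsup⟩ := hseq
  have hinf' : ∀ n, ℵ₀ ≤ μseq n := fun n => (hreg n).aleph0_le
  obtain ⟨m, hm, hblock⟩ := hn.exists_blocks hμ hinf'
  let code n := Classical.choice
    ((Cardinal.le_def _ _).1 (Cardinal.mk_pi_fin_Iio_ord_le hμ.monotone (hinf' n)))
  let Q := branchSet μseq q m code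
  have hQq : ∀ g, Q g ⊆ q :=
    branchSet_subset hμ hreg hm hblock hqclosed ⟨_, fun _ hx => (hqμ hx).le⟩
  have hQcard : ∀ g, scard (Q g) = Cardinal.lift.{1} μ :=
    mk_branchSet hμ hreg hm hblock hqclosed hqμ hqcard hsup
  have hQinj : Function.Injective Q := fun g g' h => by
    by_contra hne
    have hlt : scard (Q g ∩ Q g') < _ := mk_inter_branchSet_lt hμ hreg hm hblock hsup hne
    rw [h, inter_self, hQcard] at hlt
    exact hlt.false
  refine ⟨range Q, ?_, ?_, ?_⟩
  · rw [mk_range_eq Q hQinj,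
      Cardinal.mk_pi_Iio_ord_eq hμ.monotone (fun n => (aleph0_pos.trans_le (hinf' n)).ne') hsup]
  · rintro _ ⟨g, rfl⟩
    exact ⟨⟨⟨(hQq g).trans hqμ, hQcard g⟩, isClosedCond_branchSet hμ hreg hm hblock g⟩,
      condLe_of_subset (aleph0_pos.trans hinf).ne' (hQq g)⟩
  · rintro _ ⟨g, rfl⟩ _ ⟨g', rfl⟩ hne
    exact mk_inter_branchSet_lt hμ hreg hm hblock hsup (ne_of_apply_ne Q hne)

/-- below every normal condition `q` there is a family of
`μ^{ℵ₀}` pairwise incompatible conditions of `Q`. -/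
theorem stmt_14 (μ : Cardinal.{0}) (hinf : Cardinal.aleph0 < μ)
    (hcof : μ.ord.cof = Cardinal.aleph0)
    (μseq : ℕ → Cardinal.{0}) (hseq : GoodSeq μ μseq)
    (q : Set Ordinal.{0}) (hq : InQ μ q) (hn : IsNormalCond μseq q) :
    ∃ F : Set (Set Ordinal.{0}),
      Cardinal.mk F = Cardinal.lift.{1,0} (μ ^ Cardinal.aleph0) ∧
      (∀ q' ∈ F, InQ μ q' ∧ condLe μ q' q) ∧
      ∀ q₁ ∈ F, ∀ q₂ ∈ F, q₁ ≠ q₂ →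
        scard (q₁ ∩ q₂) < Cardinal.lift.{1,0} μ :=
  stmt_14_general μ hinf μseq hseq q hq hn
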